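/- arXiv:1902.08819 — 7 statements merged into one kernel-verified Lean document; each statement's English description precedes it below -/
import Mathlib

section
/- Let T be a finite tree (a connected acyclic simple graph) with at least 2 vertices. Then there exists a backup placement f of T such that for every backup placement g of T and every vertex v, the load of v under f is at most the load of v under g plus 1. (In particular, the placement in which every non-leaf vertex selects one of its children and every leaf selects its parent is pointwise within one unit of any optimal backup placement.) -/
set_option linter.unusedSectionVars false

open SimpleGraph

namespace Stmt0Aux

variable {V : Type*} [Fintype V] [DecidableEq V] {T : SimpleGraph V}

/-- The unique path from `v` to the root `r`. -/
noncomputable def pth (hconn : T.Connected) (r v : V) : T.Path v r :=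
  ((hconn v r).some).toPath

/-- The parent of `v` (second vertex on the path to root). -/
noncomputable def par (hconn : T.Connected) (r v : V) : V :=
  (pth hconn r v).val.getVert 1

lemma par_self (hconn : T.Connected) (r : V) : par hconn r r = r := by
  have h : (pth hconn r r).val = Walk.nil :=
    Walk.isPath_iff_eq_nil.mp (pth hconn r r).prop
  rw [par, h]
  rfl

lemma adj_par (hconn : T.Connected) {r v : V} (hv : v ≠ r) :
    T.Adj v (par hconn r v) := by
  have hl : 0 < (pth hconn r v).val.length := by
    by_contra h
    exact hv ((pth hconn r v).val.eq_of_length_eq_zero (Nat.eq_zero_of_not_pos h))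
  have := (pth hconn r v).val.adj_getVert_succ hl
  simpa [par] using this

lemma par_of_adj (hconn : T.Connected) (hacyc : T.IsAcyclic) {r u v : V}
    (h : T.Adj u v) (hne : u ≠ par hconn r v) : par hconn r u = v := by
  have hus : u ∉ (pth hconn r v).val.support := by
    intro hmem
    apply hne
    -- takeUntil gives a path from v to u; by uniqueness it is the single edge
    have hq : ((pth hconn r v).val.takeUntil u hmem).IsPath :=
      (pth hconn r v).prop.takeUntil hmem
    have hqr : (⟨((pth hconn r v).val.takeUntil u hmem).reverse, hq.reverse⟩ : T.Path u v)
        = Path.singleton h := hacyc.path_unique _ _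
    have hq1 : ((pth hconn r v).val.takeUntil u hmem).reverse = Walk.cons h Walk.nil := by
      simpa [Path.singleton] using congrArg Subtype.val hqr
    have hq2 : (pth hconn r v).val.takeUntil u hmem = Walk.cons h.symm Walk.nil := by
      have := congrArg Walk.reverse hq1
      simpa using this
    have hsplit := (pth hconn r v).val.take_spec hmem
    rw [hq2] at hsplit
    have : (pth hconn r v).val
        = Walk.cons h.symm ((pth hconn r v).val.dropUntil u hmem) := by
      simpa using hsplit.symm
    rw [par, this]
    simp [Walk.getVert_cons_succ]
  -- now cons is a path from u to r
  have hW : (Walk.cons h (pth hconn r v).val).IsPath :=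
    (Walk.cons_isPath_iff h _).mpr ⟨(pth hconn r v).prop, hus⟩
  have := hacyc.path_unique (pth hconn r u) ⟨Walk.cons h (pth hconn r v).val, hW⟩
  have hval : (pth hconn r u).val = Walk.cons h (pth hconn r v).val :=
    congrArg Subtype.val this
  rw [par, hval]
  simp [Walk.getVert_cons_succ]

lemma exists_adj (hconn : T.Connected) (hcard : 2 ≤ Fintype.card V) (v : V) :
    ∃ u, T.Adj v u := by
  obtain ⟨u, hu⟩ := Fintype.exists_ne_of_one_lt_card (by omega) v
  rcases eq_or_ne v u with rfl | hne
  · exact absurd rfl hu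
  · have hl : 0 < ((hconn v u).some).length := by
      by_contra hl
      exact hne (((hconn v u).some).eq_of_length_eq_zero (Nat.eq_zero_of_not_pos hl))
    have := ((hconn v u).some).adj_getVert_succ hl
    exact ⟨_, by simpa using this⟩

end Stmt0Aux

open Stmt0Aux in
/-- For a finite tree `T` (connected, acyclic) on at least 2 vertices,
there exists a backup placement `f` whose load at every vertex is at most the load
of any other backup placement at that vertex, plus 1. -/
theorem stmt_0 {V : Type*} [Fintype V] [DecidableEq V]
    (T : SimpleGraph V) (hconn : T.Connected) (hacyc : T.IsAcyclic)
    (hcard : 2 ≤ Fintype.card V) :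
    ∃ f : V → V, (∀ v, T.Adj v (f v)) ∧
      ∀ g : V → V, (∀ v, T.Adj v (g v)) →
        ∀ w : V, (Finset.univ.filter fun v => f v = w).card ≤
          (Finset.univ.filter fun v => g v = w).card + 1 := by
  classical
  obtain ⟨r⟩ := (Fintype.card_pos_iff.mp (by omega) : Nonempty V)
  -- spec for f
  have spec : ∀ v : V, ∃ u, T.Adj v u ∧
      (T.degree v = 1 ∨ par hconn r u = v) := by
    intro v
    by_cases hdeg : T.degree v = 1
    · obtain ⟨u, hu⟩ := exists_adj hconn hcard v
      exact ⟨u, hu, Or.inl hdeg⟩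
    · -- degree ≥ 2, pick neighbor different from parent
      have hpos : 0 < T.degree v := by
        obtain ⟨u, hu⟩ := exists_adj hconn hcard v
        exact T.degree_pos_iff_exists_adj v |>.mpr ⟨u, hu⟩
      have h2 : 1 < T.degree v := by omega
      rw [← T.card_neighborFinset_eq_degree] at h2
      obtain ⟨u, humem, hune⟩ :=
        Finset.exists_mem_ne h2 (par hconn r v)
      rw [T.mem_neighborFinset] at humem
      exact ⟨u, humem, Or.inr (par_of_adj hconn hacyc humem.symm hune)⟩
  choose f hf1 hf2 using spec
  refine ⟨f, hf1, ?_⟩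
  intro g hg w
  have hsub : (Finset.univ.filter fun v => f v = w)
      ⊆ insert (par hconn r w) (Finset.univ.filter fun v => g v = w) := by
    intro v hv
    rw [Finset.mem_filter] at hv
    obtain ⟨-, hfv⟩ := hv
    rcases hf2 v with hdeg | hpar
    · -- leaf: unique neighbor, g forced to w
      have hcard1 : (T.neighborFinset v).card = 1 := by
        rw [T.card_neighborFinset_eq_degree]; exact hdeg
      obtain ⟨a, ha⟩ := Finset.card_eq_one.mp hcard1
      have hfa : f v = a := by
        have := (T.mem_neighborFinset v (f v)).mpr (hf1 v)
        rw [ha] at this; simpa using this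
      have hga : g v = a := by
        have := (T.mem_neighborFinset v (g v)).mpr (hg v)
        rw [ha] at this; simpa using this
      apply Finset.mem_insert_of_mem
      rw [Finset.mem_filter]
      exact ⟨Finset.mem_univ v, by rw [hga, ← hfa, hfv]⟩
    · -- v is the parent of w
      rw [hfv] at hpar
      rw [← hpar]
      exact Finset.mem_insert_self _ _
  calc (Finset.univ.filter fun v => f v = w).card
      ≤ (insert (par hconn r w) (Finset.univ.filter fun v => g v = w)).card :=
        Finset.card_le_card hsub
    _ ≤ (Finset.univ.filter fun v => g v = w).card + 1 :=
        Finset.card_insert_le _ _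
end

section
/- Let G be a finite simple graph with neighborhood independence at most c, and let ID : V → ℕ be an injective function. Then for every vertex v and every finite set C of neighbors of v, the set {u ∈ C : every w ∈ C adjacent to u satisfies ID(u) < ID(w)} has cardinality at most c. (In the forest-cover algorithm, these are the children of v that have no sibling of smaller ID adjacent to them in G, i.e., the children that select v; hence each vertex is selected by at most c of its children.) -/
/-- In a graph with neighborhood independence at most `c`, for any vertex `v`,
any finite set `C` of neighbors of `v`, the set of members of `C` all of whose neighbors
in `C` have larger ID has cardinality at most `c`. -/
theorem stmt_3 {V : Type*} [DecidableEq V] (G : SimpleGraph V) [DecidableRel G.Adj]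
    (c : ℕ)
    (hni : ∀ v : V, ∀ S : Finset V, (∀ u ∈ S, G.Adj v u) →
      (∀ u ∈ S, ∀ w ∈ S, u ≠ w → ¬ G.Adj u w) → S.card ≤ c)
    (ID : V → ℕ) (hID : Function.Injective ID)
    (v : V) (C : Finset V) (hC : ∀ u ∈ C, G.Adj v u) :
    (C.filter fun u => ∀ w ∈ C, G.Adj u w → ID u < ID w).card ≤ c := by
  apply hni v
  · intro u hu
    exact hC u (Finset.mem_filter.mp hu).1
  · intro u hu w hw _ hadj
    obtain ⟨huC, hu2⟩ := Finset.mem_filter.mp hu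
    obtain ⟨hwC, hw2⟩ := Finset.mem_filter.mp hw
    exact absurd (hw2 u huC hadj.symm) (not_lt.mpr (hu2 w hwC hadj).le)
end

section
/- Let G be a finite simple graph with neighborhood independence at most c, and let ID : V → ℕ be an injective function. Fix a vertex v and a finite set C of vertices (the siblings of v, with v ∈ C). Define S to be the set of all u ∈ C such that u is adjacent to v, ID(v) < ID(u), and there is no z ∈ C with z adjacent to u and ID(v) < ID(z) < ID(u). Then S has cardinality at most c. (In the forest-cover algorithm, S is the set of siblings that select v; hence each vertex is selected by at most c of its siblings.) -/
/-- In a graph with neighborhood independence at most `c`: given a vertex `v`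
and a finite set `C` of siblings with `v ∈ C`, the set `S` of those `u ∈ C` adjacent to `v`
with `ID v < ID u` and no `z ∈ C` adjacent to `u` having `ID v < ID z < ID u`
has cardinality at most `c`. -/
theorem stmt_4 {V : Type*} [DecidableEq V] (G : SimpleGraph V) [DecidableRel G.Adj]
    (c : ℕ)
    (hni : ∀ x : V, ∀ S : Finset V, (∀ u ∈ S, G.Adj x u) →
      (∀ u ∈ S, ∀ w ∈ S, u ≠ w → ¬ G.Adj u w) → S.card ≤ c)
    (ID : V → ℕ) (hID : Function.Injective ID)
    (v : V) (C : Finset V) (hv : v ∈ C) :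
    (C.filter fun u => G.Adj u v ∧ ID v < ID u ∧
      ¬ ∃ z ∈ C, G.Adj z u ∧ ID v < ID z ∧ ID z < ID u).card ≤ c := by
  apply hni v
  · intro u hu
    simp only [Finset.mem_filter] at hu
    exact hu.2.1.symm
  · intro u hu w hw hne hadj
    simp only [Finset.mem_filter] at hu hw
    have hne' : ID u ≠ ID w := fun h => hne (hID h)
    rcases lt_or_gt_of_ne hne' with h | h
    · exact hw.2.2.2 ⟨u, hu.1, hadj, hu.2.2.1, h⟩
    · exact hu.2.2.2 ⟨w, hw.1, hadj.symm, hw.2.2.1, h⟩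
end

section
/- Let G be a finite simple graph without isolated vertices whose neighborhood independence is at most c. Then there exists a backup placement f of G such that every vertex has load at most 2c + 1 under f. -/
/-- Key counting lemma: under neighborhood independence at most `c` and no
isolated vertices, every finset `s` satisfies `|s| ≤ (c+1) * |N(s)|`. -/
theorem hall_condition_aux {V : Type*} [Fintype V] [DecidableEq V] (G : SimpleGraph V)
    [DecidableRel G.Adj] (c : ℕ)
    (hni : ∀ v : V, ∀ S : Finset V, (∀ u ∈ S, G.Adj v u) →
      (∀ u ∈ S, ∀ w ∈ S, u ≠ w → ¬ G.Adj u w) → S.card ≤ c)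
    (hiso : ∀ v : V, ∃ u, G.Adj v u) (s : Finset V) :
    s.card ≤ (c + 1) * (s.biUnion (fun v => G.neighborFinset v)).card := by
  classical
  set T := s.biUnion (fun v => G.neighborFinset v) with hT
  -- family of independent subsets of s
  set P := s.powerset.filter
      (fun I => ∀ u ∈ I, ∀ w ∈ I, u ≠ w → ¬ G.Adj u w) with hP
  have hPne : P.Nonempty := ⟨∅, by simp [hP]⟩
  obtain ⟨I, hIP, hImax⟩ := P.exists_max_image Finset.card hPne
  have hIs : I ⊆ s := Finset.mem_powerset.mp (Finset.mem_filter.mp hIP).1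
  have hIind : ∀ u ∈ I, ∀ w ∈ I, u ≠ w → ¬ G.Adj u w :=
    (Finset.mem_filter.mp hIP).2
  -- every vertex of s \ I has a neighbor in I
  have hdom : ∀ v ∈ s \ I, ∃ i ∈ I, G.Adj v i := by
    intro v hv
    by_contra hcon
    push_neg at hcon
    have hvs : v ∈ s := (Finset.mem_sdiff.mp hv).1
    have hvI : v ∉ I := (Finset.mem_sdiff.mp hv).2
    have hins : insert v I ∈ P := by
      rw [hP, Finset.mem_filter, Finset.mem_powerset]
      refine ⟨Finset.insert_subset hvs hIs, ?_⟩
      intro u hu w hw huw hadj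
      rcases Finset.mem_insert.mp hu with hu0 | huI
      · rcases Finset.mem_insert.mp hw with hw0 | hwI
        · exact huw (hu0.trans hw0.symm)
        · exact hcon w hwI (hu0 ▸ hadj)
      · rcases Finset.mem_insert.mp hw with hw0 | hwI
        · exact hcon u huI (hw0 ▸ G.adj_symm hadj)
        · exact hIind u huI w hwI huw hadj
    have := hImax _ hins
    rw [Finset.card_insert_of_notMem hvI] at this
    omega
  -- |s \ I| ≤ |T|
  have h1 : (s \ I).card ≤ T.card := by
    apply Finset.card_le_card
    intro v hv
    obtain ⟨i, hiI, hadj⟩ := hdom v hv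
    rw [hT]
    exact Finset.mem_biUnion.mpr ⟨i, hIs hiI, by
      rw [SimpleGraph.mem_neighborFinset]; exact G.adj_symm hadj⟩
  -- |I| ≤ c * |T|
  have h2 : I.card ≤ c * T.card := by
    have hsub : I ⊆ T.biUnion (fun w => I.filter (fun i => G.Adj w i)) := by
      intro i hi
      obtain ⟨u, hu⟩ := hiso i
      have huT : u ∈ T := by
        rw [hT]
        exact Finset.mem_biUnion.mpr ⟨i, hIs hi, by
          rw [SimpleGraph.mem_neighborFinset]; exact hu⟩
      exact Finset.mem_biUnion.mpr ⟨u, huT, Finset.mem_filter.mpr ⟨hi, G.adj_symm hu⟩⟩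
    calc I.card ≤ (T.biUnion (fun w => I.filter (fun i => G.Adj w i))).card :=
          Finset.card_le_card hsub
      _ ≤ ∑ w ∈ T, (I.filter (fun i => G.Adj w i)).card := Finset.card_biUnion_le
      _ ≤ ∑ _w ∈ T, c := by
          apply Finset.sum_le_sum
          intro w _
          apply hni w
          · intro u hu; exact (Finset.mem_filter.mp hu).2
          · intro u hu x hx
            exact hIind u (Finset.mem_filter.mp hu).1 x (Finset.mem_filter.mp hx).1
      _ = c * T.card := by rw [Finset.sum_const, smul_eq_mul, mul_comm]
  have h3 : (s \ I).card + I.card = s.card := Finset.card_sdiff_add_card_eq_card hIs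
  calc s.card = (s \ I).card + I.card := h3.symm
    _ ≤ T.card + c * T.card := Nat.add_le_add h1 h2
    _ = (c + 1) * T.card := by ring

/-- A finite simple graph without isolated vertices with neighborhood
independence at most `c` has a backup placement in which every vertex has load
at most `2c + 1`. -/
theorem stmt_5 {V : Type*} [Fintype V] [DecidableEq V] (G : SimpleGraph V)
    (c : ℕ)
    (hni : ∀ v : V, ∀ S : Finset V, (∀ u ∈ S, G.Adj v u) →
      (∀ u ∈ S, ∀ w ∈ S, u ≠ w → ¬ G.Adj u w) → S.card ≤ c)
    (hiso : ∀ v : V, ∃ u, G.Adj v u) :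
    ∃ f : V → V, (∀ v, G.Adj v (f v)) ∧
      ∀ w : V, (Finset.univ.filter fun v => f v = w).card ≤ 2 * c + 1 := by
  classical
  haveI : DecidableRel G.Adj := Classical.decRel _
  -- bipartite system: each vertex wants one of its neighbors, with capacity 2c+1
  set t : V → Finset (V × Fin (2 * c + 1)) :=
    fun v => (G.neighborFinset v) ×ˢ Finset.univ with ht
  have hall : ∀ s : Finset V, s.card ≤ (s.biUnion t).card := by
    intro s
    have hbi : s.biUnion t =
        (s.biUnion (fun v => G.neighborFinset v)) ×ˢ (Finset.univ : Finset (Fin (2 * c + 1))) := by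
      ext x
      simp only [ht, Finset.mem_biUnion, Finset.mem_product, Finset.mem_univ, and_true]
    have hcard : (s.biUnion t).card =
        (s.biUnion (fun v => G.neighborFinset v)).card * (2 * c + 1) := by
      rw [hbi, Finset.card_product, Finset.card_univ, Fintype.card_fin]
    rw [hcard]
    calc s.card ≤ (c + 1) * (s.biUnion (fun v => G.neighborFinset v)).card :=
          hall_condition_aux G c hni hiso s
      _ ≤ (2 * c + 1) * (s.biUnion (fun v => G.neighborFinset v)).card := by
          apply Nat.mul_le_mul_right; omega
      _ = (s.biUnion (fun v => G.neighborFinset v)).card * (2 * c + 1) := mul_comm _ _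
  obtain ⟨F, hFinj, hFmem⟩ := (Finset.all_card_le_biUnion_card_iff_exists_injective t).mp hall
  refine ⟨fun v => (F v).1, ?_, ?_⟩
  · intro v
    have := hFmem v
    rw [ht] at this
    have h1 := (Finset.mem_product.mp this).1
    rwa [SimpleGraph.mem_neighborFinset] at h1
  · intro w
    have : ((Finset.univ.filter fun v => (F v).1 = w)).card ≤
        (Finset.univ : Finset (Fin (2 * c + 1))).card := by
      apply Finset.card_le_card_of_injOn (fun v => (F v).2)
      · intro v _; exact Finset.mem_univ _
      · intro a ha b hb hab
        have ha1 : (F a).1 = w := (Finset.mem_filter.mp ha).2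
        have hb1 : (F b).1 = w := (Finset.mem_filter.mp hb).2
        apply hFinj
        exact Prod.ext (ha1.trans hb1.symm) hab
    simpa using this
end

section
/- Let d ≥ 1, let h ≥ 1 be odd, and let T be the complete d-ary tree of height h. Then every backup placement f of T in which every vertex has load at most d satisfies f(v) = root for every vertex v of depth 1; consequently, in any such placement the load of the root is exactly d. -/
/-- The complete `d`-ary tree of height `h`: vertices are lists over `Fin d` of length
at most `h`; two lists are adjacent iff one is obtained from the other by appending
a single element. -/
def daryTree (d h : ℕ) : SimpleGraph {l : List (Fin d) // l.length ≤ h} :=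
  SimpleGraph.fromRel (fun x y => ∃ a : Fin d, (y : List (Fin d)) = (x : List (Fin d)) ++ [a])

/-- For `d ≥ 1` and odd `h ≥ 1`, every backup placement of the complete
`d`-ary tree of height `h` in which every vertex has load at most `d` sends every
depth-1 vertex to the root, and the root's load is exactly `d`. -/
theorem stmt_11 (d h : ℕ) (hd : 1 ≤ d) (hh : 1 ≤ h) (hodd : Odd h)
    (f : {l : List (Fin d) // l.length ≤ h} → {l : List (Fin d) // l.length ≤ h})
    (hf : ∀ v, (daryTree d h).Adj v (f v))
    (hload : ∀ w, Set.ncard {v | f v = w} ≤ d) :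
    (∀ v : {l : List (Fin d) // l.length ≤ h}, (v : List (Fin d)).length = 1 →
      f v = ⟨[], by simp⟩) ∧
    Set.ncard {v | f v = (⟨[], by simp⟩ : {l : List (Fin d) // l.length ≤ h})} = d := by
  haveI : Finite {l : List (Fin d) // l.length ≤ h} :=
    (List.finite_length_le (Fin d) h).to_subtype
  -- Key lemma: every vertex of odd depth maps to its parent.
  have key : ∀ n k, h - k = n → Odd k → k ≤ h →
      ∀ v : {l : List (Fin d) // l.length ≤ h}, (v : List (Fin d)).length = k →
      ∃ a : Fin d, (v : List (Fin d)) = (f v : List (Fin d)) ++ [a] := by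
    intro n
    induction n using Nat.strong_induction_on with
    | _ n ih =>
      intro k hn hko hkh v hv
      have hadj := hf v
      rw [daryTree, SimpleGraph.fromRel_adj] at hadj
      rcases hadj.2 with ⟨a, ha⟩ | ⟨a, ha⟩
      · -- f v is a child of v : derive a contradiction
        exfalso
        set w := f v with hw
        have hlen : (w : List (Fin d)).length = k + 1 := by
          rw [ha]; simp [hv]
        have hk1 : k + 1 ≤ h := by have := w.2; omega
        have hk2 : k + 2 ≤ h := by
          rcases hodd with ⟨m, hm⟩; rcases hko with ⟨m', hm'⟩; omega
        have hchlen : ∀ b : Fin d, ((w : List (Fin d)) ++ [b]).length ≤ h := by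
          intro b; simp [hlen]; omega
        set g : Fin d → {l : List (Fin d) // l.length ≤ h} :=
          fun b => ⟨(w : List (Fin d)) ++ [b], hchlen b⟩ with hg
        have hchild : ∀ b : Fin d, f (g b) = w := by
          intro b
          have hclen : ((g b : List (Fin d))).length = k + 2 := by
            simp [hg, hlen]
          obtain ⟨b', hb'⟩ := ih (h - (k + 2)) (by omega) (k + 2) rfl
            (by rcases hko with ⟨m, hm⟩; exact ⟨m + 1, by omega⟩) hk2 (g b) hclen
          have hlen2 : ((f (g b) : List (Fin d))).length = k + 1 := by
            have := congrArg List.length hb'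
            simp [hclen] at this
            omega
          have heq : (f (g b) : List (Fin d)) ++ [b'] = (w : List (Fin d)) ++ [b] := by
            rw [← hb']
          have := (List.append_inj heq (by omega)).1
          exact Subtype.ext this
        have ginj : Function.Injective g := by
          intro b b' hbb
          have : (w : List (Fin d)) ++ [b] = (w : List (Fin d)) ++ [b'] :=
            congrArg Subtype.val hbb
          simpa using this
        have hnot : v ∉ Set.range g := by
          rintro ⟨b, hb⟩
          have : ((g b : List (Fin d))).length = (v : List (Fin d)).length := by rw [hb]
          simp [hg, hlen, hv] at this
          omega
        have h1 : (Set.range g).ncard = d := by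
          rw [← Set.image_univ, Set.ncard_image_of_injective _ ginj, Set.ncard_univ,
            Nat.card_eq_fintype_card, Fintype.card_fin]
        have h2 : (insert v (Set.range g)).ncard = d + 1 := by
          rw [Set.ncard_insert_of_notMem hnot (Set.toFinite _), h1]
        have h3 : insert v (Set.range g) ⊆ {u | f u = w} := by
          rintro u (rfl | ⟨b, rfl⟩)
          · exact hw.symm
          · exact hchild b
        have h4 := Set.ncard_le_ncard h3 (Set.toFinite _)
        have h5 := hload w
        omega
      · exact ⟨a, ha⟩
  have root : {l : List (Fin d) // l.length ≤ h} := ⟨[], by simp⟩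
  have part1 : ∀ v : {l : List (Fin d) // l.length ≤ h}, (v : List (Fin d)).length = 1 →
      f v = ⟨[], by simp⟩ := by
    intro v hv
    obtain ⟨a, ha⟩ := key (h - 1) 1 rfl odd_one hh v hv
    have := congrArg List.length ha
    simp [hv] at this
    apply Subtype.ext
    simpa using this
  refine ⟨part1, ?_⟩
  refine le_antisymm (hload _) ?_
  set g : Fin d → {l : List (Fin d) // l.length ≤ h} :=
    fun a => ⟨[a], by simp; omega⟩ with hg
  have ginj : Function.Injective g := by
    intro a a' haa
    have : ([a] : List (Fin d)) = [a'] := congrArg Subtype.val haa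
    simpa using this
  have h1 : (Set.range g).ncard = d := by
    rw [← Set.image_univ, Set.ncard_image_of_injective _ ginj, Set.ncard_univ,
      Nat.card_eq_fintype_card, Fintype.card_fin]
  have h3 : Set.range g ⊆ {v | f v = (⟨[], by simp⟩ : {l : List (Fin d) // l.length ≤ h})} := by
    rintro u ⟨a, rfl⟩
    exact part1 (g a) (by simp [hg])
  calc d = (Set.range g).ncard := h1.symm
    _ ≤ _ := Set.ncard_le_ncard h3 (Set.toFinite _)
end

section
/- Let d ≥ 1 and h ≥ 2, and let T' be the 'single-leafs' tree of height h: the simple graph whose vertices are the lists over Fin d of length at most h such that every list of length exactly h has last entry 0 (i.e., the complete d-ary tree of height h−1 with a single leaf child attached to each vertex of depth h−1), with two lists adjacent if and only if one is obtained from the other by appending a single element. Then there exists a backup placement f of T' such that every vertex has load at most 2 under f and the load of the root (the empty list) under f is 0. -/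
private def bp (d h : ℕ) (hd : 1 ≤ d) (hh : 2 ≤ h)
    (v : {l : List (Fin d) // l.length ≤ h ∧ (l.length = h → l.getLast? = some ⟨0, hd⟩)}) :
    {l : List (Fin d) // l.length ≤ h ∧ (l.length = h → l.getLast? = some ⟨0, hd⟩)} :=
  if hv : v.1.length < h then
    ⟨v.1 ++ [⟨0, hd⟩], by
      refine ⟨by simpa using hv, fun _ => ?_⟩
      simp [List.getLast?_concat]⟩
  else
    ⟨v.1.dropLast, by
      have h1 := v.2.1
      refine ⟨by simp [List.length_dropLast]; omega, fun hl => ?_⟩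
      exfalso
      have : v.1.length - 1 = h := by simpa using hl
      omega⟩

private lemma bp_lt {d h : ℕ} (hd : 1 ≤ d) (hh : 2 ≤ h) (v) (hv : v.1.length < h) :
    (bp d h hd hh v).1 = v.1 ++ [⟨0, hd⟩] := by
  unfold bp; rw [dif_pos hv]

private lemma bp_ge {d h : ℕ} (hd : 1 ≤ d) (hh : 2 ≤ h) (v) (hv : ¬ v.1.length < h) :
    (bp d h hd hh v).1 = v.1.dropLast := by
  unfold bp; rw [dif_neg hv]

private lemma bp_inj {d h : ℕ} (hd : 1 ≤ d) (hh : 2 ≤ h) (v₁ v₂ w)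
    (h1 : bp d h hd hh v₁ = w) (h2 : bp d h hd hh v₂ = w)
    (hiff : (v₁.1.length < h ↔ v₂.1.length < h)) : v₁ = v₂ := by
  by_cases hv : v₁.1.length < h
  · have hv2 : v₂.1.length < h := hiff.mp hv
    have e1 := bp_lt hd hh v₁ hv
    have e2 := bp_lt hd hh v₂ hv2
    rw [h1] at e1; rw [h2] at e2
    have : v₁.1 ++ [(⟨0, hd⟩ : Fin d)] = v₂.1 ++ [⟨0, hd⟩] := e1.symm.trans e2
    exact Subtype.ext (by simpa using this)
  · have hv2 : ¬ v₂.1.length < h := fun hx => hv (hiff.mpr hx)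
    have e1 := bp_ge hd hh v₁ hv
    have e2 := bp_ge hd hh v₂ hv2
    rw [h1] at e1; rw [h2] at e2
    have l1 : v₁.1.length = h := by have := v₁.2.1; omega
    have l2 : v₂.1.length = h := by have := v₂.2.1; omega
    have n1 : v₁.1 ≠ [] := by intro he; rw [he] at l1; simp at l1; omega
    have n2 : v₂.1 ≠ [] := by intro he; rw [he] at l2; simp at l2; omega
    have g1 : v₁.1.getLast n1 = ⟨0, hd⟩ := by
      have := v₁.2.2 l1
      rw [List.getLast?_eq_getLast n1] at this
      exact Option.some_injective _ this
    have g2 : v₂.1.getLast n2 = ⟨0, hd⟩ := by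
      have := v₂.2.2 l2
      rw [List.getLast?_eq_getLast n2] at this
      exact Option.some_injective _ this
    have : v₁.1 = v₂.1 := by
      rw [← List.dropLast_append_getLast n1, ← List.dropLast_append_getLast n2,
        g1, g2, ← e1, ← e2]
    exact Subtype.ext this

/-- For `d ≥ 1` and `h ≥ 2`, the "single-leafs" tree of height `h`
(vertices: lists over `Fin d` of length at most `h` whose last entry is `0` whenever the
length is exactly `h`; adjacency: one list is obtained from the other by appending a
single element) has a backup placement in which every vertex has load at most `2` and
the root (the empty list) has load `0`. -/
theorem stmt_12 (d h : ℕ) (hd : 1 ≤ d) (hh : 2 ≤ h) :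
    ∃ f : {l : List (Fin d) // l.length ≤ h ∧ (l.length = h → l.getLast? = some ⟨0, hd⟩)} →
          {l : List (Fin d) // l.length ≤ h ∧ (l.length = h → l.getLast? = some ⟨0, hd⟩)},
      (∀ v, (SimpleGraph.fromRel (fun x y :
            {l : List (Fin d) // l.length ≤ h ∧ (l.length = h → l.getLast? = some ⟨0, hd⟩)} =>
            ∃ a : Fin d, (y : List (Fin d)) = (x : List (Fin d)) ++ [a])).Adj v (f v)) ∧
      (∀ w, Set.ncard {v | f v = w} ≤ 2) ∧
      Set.ncard {v | f v = ⟨[], by simp; omega⟩} = 0 := by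
  classical
  refine ⟨bp d h hd hh, ?_, ?_, ?_⟩
  · intro v
    rw [SimpleGraph.fromRel_adj]
    by_cases hv : v.1.length < h
    · have e := bp_lt hd hh v hv
      refine ⟨?_, Or.inl ⟨⟨0, hd⟩, e⟩⟩
      intro he
      rw [← he] at e
      have := congrArg List.length e
      simp at this
    · have e := bp_ge hd hh v hv
      have hlen : v.1.length = h := by have := v.2.1; omega
      have hne : v.1 ≠ [] := by intro he; rw [he] at hlen; simp at hlen; omega
      refine ⟨?_, Or.inr ⟨v.1.getLast hne, by
        rw [e, List.dropLast_append_getLast hne]⟩⟩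
      intro he
      rw [← he] at e
      have := congrArg List.length e
      simp [List.length_dropLast] at this
      omega
  · intro w
    rw [← Nat.card_coe_set_eq]
    have hinj : Function.Injective
        (fun v : {v | bp d h hd hh v = w} => decide (v.1.1.length < h)) := by
      intro v₁ v₂ hg
      simp only [decide_eq_decide] at hg
      exact Subtype.ext (bp_inj hd hh _ _ w v₁.2 v₂.2 hg)
    calc Nat.card {v | bp d h hd hh v = w} ≤ Nat.card Bool :=
          Nat.card_le_card_of_injective _ hinj
      _ = 2 := by simp [Nat.card_eq_fintype_card]
  · have hemp : {v | bp d h hd hh v = ⟨[], by simp; omega⟩} = ∅ := by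
      ext v
      simp only [Set.mem_setOf_eq, Set.mem_empty_iff_false, iff_false]
      intro he
      by_cases hv : v.1.length < h
      · have e := bp_lt hd hh v hv
        rw [he] at e
        simp at e
      · have e := bp_ge hd hh v hv
        rw [he] at e
        have hlen : v.1.length = h := by have := v.2.1; omega
        have := congrArg List.length e
        simp [List.length_dropLast] at this
        omega
    rw [hemp, Set.ncard_empty]
end

section
/- Let u be a point of the Euclidean plane ℝ², let R > 0, and let S be a finite set of at least 6 points of ℝ², each at distance at most R from u. Then there exist two distinct points p, q ∈ S with dist(p, q) ≤ R. (Consequently, a unit disk graph with transmission radius R has neighborhood independence at most 5.) -/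
open Real

private lemma six_angles' (b : Fin 6 → ℝ) (hb : ∀ i, b i ∈ Set.Ioc (-π) π) :
    ∃ i j : Fin 6, i ≠ j ∧ 1/2 ≤ Real.cos (b i - b j) := by
  by_contra h
  push_neg at h
  set σ := Tuple.sort b with hσ
  set c : Fin 6 → ℝ := b ∘ σ with hc
  have mono : Monotone c := Tuple.monotone_sort b
  have key : ∀ i j : Fin 6, i ≠ j → c i ≤ c j → π/3 < c j - c i := by
    intro i j hij hle
    by_contra hle2
    push_neg at hle2
    have hne : σ j ≠ σ i := fun hh => hij (σ.injective hh).symm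
    have := h (σ j) (σ i) hne
    have hcos : Real.cos (c j - c i) ≥ 1/2 := by
      have := Real.cos_le_cos_of_nonneg_of_le_pi (x := c j - c i) (y := π/3)
        (by linarith) (by linarith [Real.pi_pos]) hle2
      rw [Real.cos_pi_div_three] at this
      linarith
    simp only [hc, Function.comp] at hcos
    linarith
  have m01 := mono (show (0:Fin 6) ≤ 1 by decide)
  have m12 := mono (show (1:Fin 6) ≤ 2 by decide)
  have m23 := mono (show (2:Fin 6) ≤ 3 by decide)
  have m34 := mono (show (3:Fin 6) ≤ 4 by decide)
  have m45 := mono (show (4:Fin 6) ≤ 5 by decide)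
  have g01 := key 0 1 (by decide) m01
  have g12 := key 1 2 (by decide) m12
  have g23 := key 2 3 (by decide) m23
  have g34 := key 3 4 (by decide) m34
  have g45 := key 4 5 (by decide) m45
  have hc0 : -π < c 0 := (hb (σ 0)).1
  have hc5 : c 5 ≤ π := (hb (σ 5)).2
  have hne : σ 5 ≠ σ 0 := fun hh => absurd (σ.injective hh) (by decide)
  have hcos := h (σ 5) (σ 0) hne
  have hrw : Real.cos (c 5 - c 0) = Real.cos (2 * π - (c 5 - c 0)) := by
    rw [Real.cos_two_pi_sub]
  have hge : 1/2 ≤ Real.cos (c 5 - c 0) := by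
    rw [hrw, ← Real.cos_pi_div_three]
    exact Real.cos_le_cos_of_nonneg_of_le_pi (by linarith) (by linarith [Real.pi_pos])
      (by linarith)
  simp only [hc, Function.comp] at hge
  linarith

private lemma geom' (R : ℝ) (z w : ℂ) (hz : z ≠ 0) (hw : w ≠ 0)
    (hzR : ‖z‖ ≤ R) (hwR : ‖w‖ ≤ R)
    (hcos : 1/2 ≤ Real.cos (z.arg - w.arg)) : ‖z - w‖ ≤ R := by
  have hzw : z * (starRingEnd ℂ) w ≠ 0 := by simp [hz, hw]
  have harg : ((z * (starRingEnd ℂ) w).arg : Real.Angle) = ((z.arg - w.arg : ℝ) : Real.Angle) := by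
    rw [Complex.arg_mul_coe_angle hz (by simpa using hw), Complex.arg_conj_coe_angle,
      Real.Angle.coe_sub, sub_eq_add_neg]
  have hcoseq : Real.cos (z * (starRingEnd ℂ) w).arg = Real.cos (z.arg - w.arg) := by
    have := congrArg Real.Angle.cos harg
    simpa only [Real.Angle.cos_coe] using this
  have habs : ‖z * (starRingEnd ℂ) w‖ ≠ 0 := by simpa using hzw
  have h2 : ‖z * (starRingEnd ℂ) w‖ = ‖z‖ * ‖w‖ := by
    simp [map_mul]
  have h1 := Complex.cos_arg hzw
  rw [hcoseq, eq_div_iff habs] at h1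
  have hre : (z * (starRingEnd ℂ) w).re
      = ‖z‖ * ‖w‖ * Real.cos (z.arg - w.arg) := by
    rw [← h1, h2]; ring
  have hsq : ‖z - w‖ ^ 2
      = ‖z‖ ^ 2 + ‖w‖ ^ 2
        - 2 * (‖z‖ * ‖w‖ * Real.cos (z.arg - w.arg)) := by
    rw [Complex.sq_norm, Complex.normSq_sub, hre, Complex.normSq_eq_norm_sq, Complex.normSq_eq_norm_sq]
  have ha : 0 < ‖z‖ := norm_pos_iff.mpr hz
  have hb : 0 < ‖w‖ := norm_pos_iff.mpr hw
  have hd : 0 ≤ ‖z - w‖ := norm_nonneg _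
  nlinarith [hsq, mul_pos ha hb, mul_nonneg (sub_nonneg.mpr hzR) (sub_nonneg.mpr hwR),
    sq_nonneg (‖z‖ - ‖w‖)]

private lemma coords' (u p q : EuclideanSpace ℝ (Fin 2)) :
    dist p q = ‖(⟨p 0 - u 0, p 1 - u 1⟩ - ⟨q 0 - u 0, q 1 - u 1⟩ : ℂ)‖ := by
  rw [EuclideanSpace.dist_eq, Complex.norm_def]
  congr 1
  simp [Fin.sum_univ_two, Complex.normSq, Real.dist_eq, sq_abs]
  ring

private lemma nonzero' (u p : EuclideanSpace ℝ (Fin 2)) (h : p ≠ u) :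
    (⟨p 0 - u 0, p 1 - u 1⟩ : ℂ) ≠ 0 := by
  intro hh
  apply h
  rw [Complex.ext_iff] at hh
  simp at hh
  ext i
  fin_cases i
  · show p 0 = u 0; linarith [hh.1]
  · show p 1 = u 1; linarith [hh.2]

/-- Among any 6 (or more) points of the plane lying at distance at most `R > 0`
from a point `u`, some two distinct points are at distance at most `R` from each other. -/
theorem stmt_13 (u : EuclideanSpace ℝ (Fin 2)) (R : ℝ) (hR : 0 < R)
    (S : Finset (EuclideanSpace ℝ (Fin 2))) (hS : 6 ≤ S.card)
    (hdist : ∀ p ∈ S, dist u p ≤ R) :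
    ∃ p ∈ S, ∃ q ∈ S, p ≠ q ∧ dist p q ≤ R := by
  classical
  by_cases hu : u ∈ S
  · -- pick any other point of S
    have hcard : 0 < (S.erase u).card := by
      have := Finset.card_erase_of_mem hu
      omega
    obtain ⟨q, hq⟩ := Finset.card_pos.mp hcard
    refine ⟨u, hu, q, Finset.mem_of_mem_erase hq, (Finset.ne_of_mem_erase hq).symm, ?_⟩
    exact hdist q (Finset.mem_of_mem_erase hq)
  · obtain ⟨T, hTS, hT6⟩ := Finset.exists_subset_card_eq hS
    set e := (Finset.equivFinOfCardEq hT6).symm with he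
    set f : EuclideanSpace ℝ (Fin 2) → ℂ := fun p => ⟨p 0 - u 0, p 1 - u 1⟩ with hf
    set P : Fin 6 → EuclideanSpace ℝ (Fin 2) := fun i => (e i : EuclideanSpace ℝ (Fin 2)) with hP
    have hPS : ∀ i, P i ∈ S := fun i => hTS (e i).2
    have hPu : ∀ i, P i ≠ u := fun i h => hu (h ▸ hPS i)
    have hPnz : ∀ i, f (P i) ≠ 0 := fun i => nonzero' u (P i) (hPu i)
    have hPabs : ∀ i, ‖f (P i)‖ ≤ R := by
      intro i
      have := coords' u (P i) u
      simp only [sub_self] at this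
      have h0 : (⟨(0:ℝ), (0:ℝ)⟩ : ℂ) = 0 := by rw [Complex.ext_iff]; simp
      rw [h0, sub_zero] at this
      calc ‖f (P i)‖ = dist (P i) u := this.symm
        _ = dist u (P i) := dist_comm _ _
        _ ≤ R := hdist _ (hPS i)
    set b : Fin 6 → ℝ := fun i => (f (P i)).arg with hb
    obtain ⟨i, j, hij, hcos⟩ := six_angles' b (fun i => Complex.arg_mem_Ioc _)
    have hPij : P i ≠ P j := by
      intro hh
      apply hij
      have : e i = e j := Subtype.ext hh
      exact (Finset.equivFinOfCardEq hT6).symm.injective this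
    refine ⟨P i, hPS i, P j, hPS j, hPij, ?_⟩
    rw [coords' u (P i) (P j)]
    exact geom' R (f (P i)) (f (P j)) (hPnz i) (hPnz j) (hPabs i) (hPabs j) hcos
end
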